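/- arXiv:1404.3555 — 5 statements merged into one kernel-verified Lean document; each statement's English description precedes it below -/
import Mathlib

section
/- Let (Ω, ℱ, (ℱ_s), ℙ) be a filtered probability space carrying ℝ^k-valued adapted processes (F_s) and (ℓ_s) and a real adapted process (y_s) satisfying Assumption 1 with functions 𝒜, ℬ_i (i = 1,…,p), 𝒞_j (j = 1,…,q). Fix z ∈ ℝ, integers t < T, and define backward sequences by the terminal conditions A_T = 0, B_{T,i} = 0 ∈ ℝ^k, C_{T,j} = 0 ∈ ℝ^k and, for s = T−1,…,t: A_s = A_{s+1} + 𝒜(z, B_{s+1,1}, C_{s+1,1}); B_{s,i} = B_{s+1,i+1} + ℬ_i(z, B_{s+1,1}, C_{s+1,1}) for 1 ≤ i ≤ p−1 and B_{s,p} = ℬ_p(z, B_{s+1,1}, C_{s+1,1}); C_{s,j} = C_{s+1,j+1} + 𝒞_j(z, B_{s+1,1}, C_{s+1,1}) for 1 ≤ j ≤ q−1 and C_{s,q} = 𝒞_q(z, B_{s+1,1}, C_{s+1,1}). Then 𝔼[exp(z (y_{t+1} + ⋯ + y_T)) | ℱ_t] = exp(A_t + ∑_{i=1}^p B_{t,i}·F_{t+1−i}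 + ∑_{j=1}^q C_{t,j}·ℓ_{t+1−j}) almost surely. -/
open MeasureTheory ProbabilityTheory Real

/-- Scalar product in `ℝ^k`. -/
def dotk {k : ℕ} (a b : Fin k → ℝ) : ℝ := ∑ i, a i * b i

/-!
Put `X_s = exp (z (y_{s+1} + ⋯ + y_T))`, so `X_s = exp (z y_{s+1}) X_{s+1}`, and argue by backward
induction on `s`. By the tower property and pulling out the `ℱ_{s+1}`-measurable factor,
`𝔼[X_s | ℱ_s] = 𝔼[exp (z y_{s+1} + A_{s+1} + ∑ B_{s+1,i}·F_{s+1-i} + ∑ C_{s+1,j}·ℓ_{s+1-j}) | ℱ_s]`.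
All lagged terms except `B_{s+1,1}·F_{s+1}` and `C_{s+1,1}·ℓ_{s+1}` are `ℱ_s`-measurable and come
out, shifted down by one lag; Assumption 1 evaluates what is left, and collecting the coefficients
gives the recursion. Every exponential involved is integrable because the random variables with all
exponential moments finite form a vector space, by `exp (a + b) ≤ exp (2a) + exp (2b)`.
-/

lemma exp_add_le_exp_two_mul_add_exp_two_mul (a b : ℝ) :
    exp (a + b) ≤ exp (2 * a) + exp (2 * b) := by
  rw [exp_add, two_mul, two_mul, exp_add, exp_add]
  nlinarith [sq_nonneg (exp a - exp b)]

section ExpMoments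

variable {Ω : Type*} {m0 : MeasurableSpace Ω}

def expMomentSubmodule (μ : Measure Ω) [IsFiniteMeasure μ] : Submodule ℝ (Ω → ℝ) where
  carrier := {X | ∀ t : ℝ, Integrable (fun ω => exp (t * X ω)) μ}
  zero_mem' _ := by simp
  add_mem' {X Y} hX hY t := by
    have hXm : AEMeasurable X μ :=
      aemeasurable_of_aemeasurable_exp (by simpa using (hX 1).aemeasurable)
    have hYm : AEMeasurable Y μ :=
      aemeasurable_of_aemeasurable_exp (by simpa using (hY 1).aemeasurable)
    refine Integrable.mono' ((hX (2 * t)).add (hY (2 * t)))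
      (((hXm.add hYm).const_mul t).exp).aestronglyMeasurable (ae_of_all _ fun ω => ?_)
    rw [norm_of_nonneg (exp_pos _).le]
    simpa only [Pi.add_apply, mul_add, mul_assoc] using
      exp_add_le_exp_two_mul_add_exp_two_mul (t * X ω) (t * Y ω)
  smul_mem' c X hX t := by simpa [mul_assoc] using hX (t * c)

variable {μ : Measure Ω} [IsFiniteMeasure μ] {X : Ω → ℝ}

lemma const_mem_expMomentSubmodule (a : ℝ) : (fun _ => a) ∈ expMomentSubmodule μ :=
  fun _ => integrable_const _

lemma integrable_exp_of_mem_expMomentSubmodule (hX : X ∈ expMomentSubmodule μ) :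
    Integrable (fun ω => exp (X ω)) μ := by
  simpa using hX 1

end ExpMoments

theorem condExp_mul_condExp_of_le {Ω : Type*} {m₁ m₂ m0 : MeasurableSpace Ω} {μ : Measure Ω}
    {f g : Ω → ℝ} (hm₁₂ : m₁ ≤ m₂) (hm₂ : m₂ ≤ m0) [SigmaFinite (μ.trim hm₂)]
    (hf : StronglyMeasurable[m₂] f) (hfg : Integrable (f * g) μ) (hg : Integrable g μ) :
    μ[f * g | m₁] =ᵐ[μ] μ[f * μ[g | m₂] | m₁] :=
  (condExp_condExp_of_le hm₁₂ hm₂).symm.trans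
    (condExp_congr_ae (condExp_mul_of_stronglyMeasurable_left hf hfg hg))

lemma dotk_eq_dotProduct {k : ℕ} (a b : Fin k → ℝ) : dotk a b = a ⬝ᵥ b := rfl

section Lags

variable {Ω : Type*} {k p : ℕ}

def lagShift {V : Type*} [Zero V] (b : Fin p → V) : Fin p → V :=
  fun i => if h : (i : ℕ) + 1 < p then b ⟨(i : ℕ) + 1, h⟩ else 0

/-- Indices are 0-based: `b i` plays the role of the paper's coefficient `B_{s,i+1}` of `F_{s-i}`. -/
def lagSum (b : Fin p → Fin k → ℝ) (G : ℤ → Ω → Fin k → ℝ) (s : ℤ) (ω : Ω) : ℝ :=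
  ∑ i : Fin p, dotk (b i) (G (s - (i : ℕ)) ω)

variable (b b' : Fin p → Fin k → ℝ) (G : ℤ → Ω → Fin k → ℝ) (s : ℤ)

lemma lagSum_zero_left : lagSum (0 : Fin p → Fin k → ℝ) G s = 0 := by
  ext; simp [lagSum, dotk_eq_dotProduct]

lemma lagSum_add_left : lagSum (b + b') G s = lagSum b G s + lagSum b' G s := by
  ext; simp [lagSum, dotk_eq_dotProduct, add_dotProduct, Finset.sum_add_distrib]

lemma lagSum_succ (hp : 0 < p) :
    lagSum b G (s + 1) = (fun ω => dotk (b ⟨0, hp⟩) (G (s + 1) ω)) + lagSum (lagShift b) G s := by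
  obtain ⟨p, rfl⟩ : ∃ p', p = p' + 1 := ⟨p - 1, by omega⟩
  ext ω
  rw [lagSum, Fin.sum_univ_succ, Pi.add_apply, lagSum, Fin.sum_univ_castSucc]
  simp [lagShift, dotk_eq_dotProduct, Fin.succ]

lemma stronglyMeasurable_lagSum {m0 : MeasurableSpace Ω} {ℱ : Filtration ℤ m0}
    (hG : ∀ u, StronglyMeasurable[ℱ u] (G u)) : StronglyMeasurable[ℱ s] (lagSum b G s) := by
  refine Finset.stronglyMeasurable_fun_sum _ fun i _ => ?_
  exact (continuous_const.dotProduct continuous_id).comp_stronglyMeasurable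
    ((hG _).mono (ℱ.mono (by omega)))

lemma lagSum_mem_expMomentSubmodule {m0 : MeasurableSpace Ω} {μ : Measure Ω} [IsFiniteMeasure μ]
    (hG : ∀ u c, (fun ω => dotk c (G u ω)) ∈ expMomentSubmodule μ) :
    lagSum b G s ∈ expMomentSubmodule μ := by
  have : lagSum b G s = ∑ i : Fin p, fun ω => dotk (b i) (G (s - (i : ℕ)) ω) := by
    ext; simp [lagSum]
  rw [this]
  exact Submodule.sum_mem _ fun i _ => hG _ _

end Lags

section Model

variable {Ω : Type*} {k p q : ℕ}

noncomputable def expAffine (a : ℝ) (b : Fin p → Fin k → ℝ) (c : Fin q → Fin k → ℝ)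
    (F L : ℤ → Ω → Fin k → ℝ) (s : ℤ) (ω : Ω) : ℝ :=
  exp (a + lagSum b F s ω + lagSum c L s ω)

lemma expAffine_zero (F L : ℤ → Ω → Fin k → ℝ) (s : ℤ) :
    expAffine 0 (0 : Fin p → Fin k → ℝ) (0 : Fin q → Fin k → ℝ) F L s = fun _ => 1 := by
  ext; simp [expAffine, lagSum_zero_left]

lemma expAffine_mul (a a' : ℝ) (b b' : Fin p → Fin k → ℝ) (c c' : Fin q → Fin k → ℝ)
    (F L : ℤ → Ω → Fin k → ℝ) (s : ℤ) :
    expAffine a b c F L s * expAffine a' b' c' F L s =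
      expAffine (a + a') (b + b') (c + c') F L s := by
  ext ω
  simp only [expAffine, Pi.mul_apply, ← exp_add, lagSum_add_left, Pi.add_apply]
  ring_nf

lemma exp_mul_expAffine_add_one (y : ℤ → Ω → ℝ) (F L : ℤ → Ω → Fin k → ℝ) (z a : ℝ)
    (b : Fin p → Fin k → ℝ) (c : Fin q → Fin k → ℝ) (s : ℤ) (hp : 0 < p) (hq : 0 < q) :
    (fun ω => exp (z * y (s + 1) ω) * expAffine a b c F L (s + 1) ω) =
      expAffine a (lagShift b) (lagShift c) F L s * fun ω => exp (z * y (s + 1) ω +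
        dotk (b ⟨0, hp⟩) (F (s + 1) ω) + dotk (c ⟨0, hq⟩) (L (s + 1) ω)) := by
  ext ω
  simp only [expAffine, lagSum_succ _ _ _ hp, lagSum_succ _ _ _ hq, Pi.add_apply, Pi.mul_apply,
    ← exp_add]
  congr 1
  ring

/-- Assumption 1 (without the adaptedness of the processes). -/
structure HasExpAffineCondMGF {m0 : MeasurableSpace Ω} (μ : Measure Ω) (ℱ : Filtration ℤ m0)
    (y : ℤ → Ω → ℝ) (F L : ℤ → Ω → Fin k → ℝ)
    (𝒜 : ℝ → (Fin k → ℝ) → (Fin k → ℝ) → ℝ)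
    (ℬ : ℝ → (Fin k → ℝ) → (Fin k → ℝ) → Fin p → (Fin k → ℝ))
    (𝒞 : ℝ → (Fin k → ℝ) → (Fin k → ℝ) → Fin q → (Fin k → ℝ)) : Prop where
  integrable_exp : ∀ (s : ℤ) (z : ℝ) (b c : Fin k → ℝ),
    Integrable (fun ω => exp (z * y (s + 1) ω + dotk b (F (s + 1) ω) + dotk c (L (s + 1) ω))) μ
  condExp_exp : ∀ (s : ℤ) (z : ℝ) (b c : Fin k → ℝ),
    μ[fun ω => exp (z * y (s + 1) ω + dotk b (F (s + 1) ω) + dotk c (L (s + 1) ω)) | ℱ s]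
      =ᵐ[μ] expAffine (𝒜 z b c) (ℬ z b c) (𝒞 z b c) F L s

namespace HasExpAffineCondMGF

variable {m0 : MeasurableSpace Ω} {μ : Measure Ω} [IsFiniteMeasure μ] {ℱ : Filtration ℤ m0}
  {y : ℤ → Ω → ℝ} {F L : ℤ → Ω → Fin k → ℝ}
  {𝒜 : ℝ → (Fin k → ℝ) → (Fin k → ℝ) → ℝ}
  {ℬ : ℝ → (Fin k → ℝ) → (Fin k → ℝ) → Fin p → (Fin k → ℝ)}
  {𝒞 : ℝ → (Fin k → ℝ) → (Fin k → ℝ) → Fin q → (Fin k → ℝ)}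

lemma mem_expMomentSubmodule (h : HasExpAffineCondMGF μ ℱ y F L 𝒜 ℬ 𝒞) (u : ℤ) :
    y u ∈ expMomentSubmodule μ ∧ (∀ b, (fun ω => dotk b (F u ω)) ∈ expMomentSubmodule μ) ∧
      ∀ c, (fun ω => dotk c (L u ω)) ∈ expMomentSubmodule μ := by
  have hint := sub_add_cancel u 1 ▸ h.integrable_exp (u - 1)
  refine ⟨fun t => ?_, fun b t => ?_, fun c t => ?_⟩
  · simpa [dotk_eq_dotProduct] using hint t 0 0
  · simpa [dotk_eq_dotProduct, smul_dotProduct] using hint 0 (t • b) 0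
  · simpa [dotk_eq_dotProduct, smul_dotProduct] using hint 0 0 (t • c)

lemma integrable_exp_mul_expAffine (h : HasExpAffineCondMGF μ ℱ y F L 𝒜 ℬ 𝒞) (z a : ℝ)
    (b : Fin p → Fin k → ℝ) (c : Fin q → Fin k → ℝ) (u : ℤ) :
    Integrable (fun ω => exp (z * y u ω) * expAffine a b c F L u ω) μ := by
  have hmem : (fun ω => z * y u ω + (a + lagSum b F u ω + lagSum c L u ω))
      ∈ expMomentSubmodule μ :=
    add_mem (Submodule.smul_mem _ z (h.mem_expMomentSubmodule u).1)
      (add_mem (add_mem (const_mem_expMomentSubmodule a)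
        (lagSum_mem_expMomentSubmodule b F u fun v => (h.mem_expMomentSubmodule v).2.1))
        (lagSum_mem_expMomentSubmodule c L u fun v => (h.mem_expMomentSubmodule v).2.2))
  simpa only [expAffine, ← exp_add] using integrable_exp_of_mem_expMomentSubmodule hmem

lemma integrable_exp_mul_sum (h : HasExpAffineCondMGF μ ℱ y F L 𝒜 ℬ 𝒞) (z : ℝ) (S : Finset ℤ) :
    Integrable (fun ω => exp (z * ∑ u ∈ S, y u ω)) μ := by
  have hmem : ∑ u ∈ S, y u ∈ expMomentSubmodule μ :=
    Submodule.sum_mem _ fun u _ => (h.mem_expMomentSubmodule u).1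
  simpa using hmem z

theorem condExp_exp_mul_expAffine (h : HasExpAffineCondMGF μ ℱ y F L 𝒜 ℬ 𝒞) (hp : 0 < p)
    (hq : 0 < q) (hFad : ∀ s, StronglyMeasurable[ℱ s] (F s))
    (hLad : ∀ s, StronglyMeasurable[ℱ s] (L s)) (s : ℤ) (z a : ℝ)
    (b : Fin p → Fin k → ℝ) (c : Fin q → Fin k → ℝ) :
    μ[fun ω => exp (z * y (s + 1) ω) * expAffine a b c F L (s + 1) ω | ℱ s] =ᵐ[μ]
      expAffine (a + 𝒜 z (b ⟨0, hp⟩) (c ⟨0, hq⟩)) (lagShift b + ℬ z (b ⟨0, hp⟩) (c ⟨0, hq⟩))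
        (lagShift c + 𝒞 z (b ⟨0, hp⟩) (c ⟨0, hq⟩)) F L s := by
  have hsplit := exp_mul_expAffine_add_one y F L z a b c s hp hq
  have hmeas : StronglyMeasurable[ℱ s] (expAffine a (lagShift b) (lagShift c) F L s) :=
    continuous_exp.comp_stronglyMeasurable ((stronglyMeasurable_const.add
      (stronglyMeasurable_lagSum _ F s hFad)).add (stronglyMeasurable_lagSum _ L s hLad))
  rw [← expAffine_mul, hsplit]
  exact (condExp_mul_of_stronglyMeasurable_left hmeas
      (hsplit ▸ h.integrable_exp_mul_expAffine z a b c (s + 1))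
      (h.integrable_exp s z (b ⟨0, hp⟩) (c ⟨0, hq⟩))).trans
    (Filter.EventuallyEq.rfl.mul (h.condExp_exp s z (b ⟨0, hp⟩) (c ⟨0, hq⟩)))

theorem condExp_exp_mul_sum_Icc_eq_of_succ (h : HasExpAffineCondMGF μ ℱ y F L 𝒜 ℬ 𝒞) (hp : 0 < p)
    (hq : 0 < q) (hyad : ∀ s, StronglyMeasurable[ℱ s] (y s))
    (hFad : ∀ s, StronglyMeasurable[ℱ s] (F s)) (hLad : ∀ s, StronglyMeasurable[ℱ s] (L s))
    {s T : ℤ} (hsT : s < T) {z a : ℝ} {b : Fin p → Fin k → ℝ} {c : Fin q → Fin k → ℝ}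
    (hnext : μ[fun ω => exp (z * ∑ u ∈ Finset.Icc (s + 1 + 1) T, y u ω) | ℱ (s + 1)]
      =ᵐ[μ] expAffine a b c F L (s + 1)) :
    μ[fun ω => exp (z * ∑ u ∈ Finset.Icc (s + 1) T, y u ω) | ℱ s] =ᵐ[μ]
      expAffine (a + 𝒜 z (b ⟨0, hp⟩) (c ⟨0, hq⟩)) (lagShift b + ℬ z (b ⟨0, hp⟩) (c ⟨0, hq⟩))
        (lagShift c + 𝒞 z (b ⟨0, hp⟩) (c ⟨0, hq⟩)) F L s := by
  have hsplit : (fun ω => exp (z * ∑ u ∈ Finset.Icc (s + 1) T, y u ω)) =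
      (fun ω => exp (z * y (s + 1) ω)) *
        fun ω => exp (z * ∑ u ∈ Finset.Icc (s + 1 + 1) T, y u ω) := by
    ext ω
    rw [Finset.Icc_eq_cons_Ioc (by omega), Finset.sum_cons, ← Finset.Icc_add_one_left_eq_Ioc,
      Pi.mul_apply, ← exp_add, mul_add]
  have hmeas : StronglyMeasurable[ℱ (s + 1)] fun ω => exp (z * y (s + 1) ω) :=
    continuous_exp.comp_stronglyMeasurable ((hyad (s + 1)).const_mul z)
  rw [hsplit]
  refine (condExp_mul_condExp_of_le (ℱ.mono (by omega)) (ℱ.le _) hmeas ?_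
    (h.integrable_exp_mul_sum z _)).trans ?_
  · rw [← hsplit]
    exact h.integrable_exp_mul_sum z _
  refine (condExp_congr_ae (Filter.EventuallyEq.mul Filter.EventuallyEq.rfl hnext)).trans ?_
  exact h.condExp_exp_mul_expAffine hp hq hFad hLad s z a b c

end HasExpAffineCondMGF

end Model

theorem mgf_physical_recursion_general
    {Ω : Type*} {m0 : MeasurableSpace Ω} {μ : Measure Ω} [IsProbabilityMeasure μ]
    (ℱ : Filtration ℤ m0) {k p q : ℕ} (hp : 0 < p) (hq : 0 < q)
    (F L : ℤ → Ω → (Fin k → ℝ)) (y : ℤ → Ω → ℝ)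
    -- the processes are adapted
    (hFad : ∀ s : ℤ, StronglyMeasurable[ℱ s] (F s))
    (hLad : ∀ s : ℤ, StronglyMeasurable[ℱ s] (L s))
    (hyad : ∀ s : ℤ, StronglyMeasurable[ℱ s] (y s))
    -- Assumption 1
    (𝒜 : ℝ → (Fin k → ℝ) → (Fin k → ℝ) → ℝ)
    (ℬ : ℝ → (Fin k → ℝ) → (Fin k → ℝ) → Fin p → (Fin k → ℝ))
    (𝒞 : ℝ → (Fin k → ℝ) → (Fin k → ℝ) → Fin q → (Fin k → ℝ))
    (hint : ∀ (s : ℤ) (z : ℝ) (b c : Fin k → ℝ),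
      Integrable (fun ω =>
        Real.exp (z * y (s + 1) ω + dotk b (F (s + 1) ω) + dotk c (L (s + 1) ω))) μ)
    (haff : ∀ (s : ℤ) (z : ℝ) (b c : Fin k → ℝ),
      (μ[fun ω =>
          Real.exp (z * y (s + 1) ω + dotk b (F (s + 1) ω) + dotk c (L (s + 1) ω)) | ℱ s])
        =ᵐ[μ] fun ω => Real.exp (𝒜 z b c
          + ∑ i : Fin p, dotk (ℬ z b c i) (F (s - (i : ℕ)) ω)
          + ∑ j : Fin q, dotk (𝒞 z b c j) (L (s - (j : ℕ)) ω)))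
    -- the backward sequences
    (z : ℝ) (t T : ℤ) (htT : t < T)
    (A : ℤ → ℝ) (B : ℤ → Fin p → (Fin k → ℝ)) (C : ℤ → Fin q → (Fin k → ℝ))
    (hAT : A T = 0) (hBT : ∀ i, B T i = 0) (hCT : ∀ j, C T j = 0)
    (hArec : ∀ s : ℤ, t ≤ s → s < T →
      A s = A (s + 1) + 𝒜 z (B (s + 1) ⟨0, hp⟩) (C (s + 1) ⟨0, hq⟩))
    (hBrec : ∀ (s : ℤ), t ≤ s → s < T → ∀ i : Fin p,
      B s i = (if h : (i : ℕ) + 1 < p then B (s + 1) ⟨(i : ℕ) + 1, h⟩ else 0)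
        + ℬ z (B (s + 1) ⟨0, hp⟩) (C (s + 1) ⟨0, hq⟩) i)
    (hCrec : ∀ (s : ℤ), t ≤ s → s < T → ∀ j : Fin q,
      C s j = (if h : (j : ℕ) + 1 < q then C (s + 1) ⟨(j : ℕ) + 1, h⟩ else 0)
        + 𝒞 z (B (s + 1) ⟨0, hp⟩) (C (s + 1) ⟨0, hq⟩) j) :
    (μ[fun ω => Real.exp (z * ∑ u ∈ Finset.Icc (t + 1) T, y u ω) | ℱ t])
      =ᵐ[μ] fun ω => Real.exp (A t
        + ∑ i : Fin p, dotk (B t i) (F (t - (i : ℕ)) ω)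
        + ∑ j : Fin q, dotk (C t j) (L (t - (j : ℕ)) ω)) := by
  have hmodel : HasExpAffineCondMGF μ ℱ y F L 𝒜 ℬ 𝒞 := ⟨hint, haff⟩
  suffices key : ∀ s ≤ T, t ≤ s → μ[fun ω => exp (z * ∑ u ∈ Finset.Icc (s + 1) T, y u ω) | ℱ s]
      =ᵐ[μ] expAffine (A s) (B s) (C s) F L s from key t htT.le le_rfl
  refine Int.leInductionDown (fun _ => ?_) fun n _ hnext htn => ?_
  · rw [Finset.Icc_eq_empty (by omega), hAT, (funext hBT : B T = 0), (funext hCT : C T = 0),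
      expAffine_zero]
    simpa using (condExp_const (ℱ.le T) (1 : ℝ)).eventuallyEq
  obtain ⟨s, rfl⟩ : ∃ s, n = s + 1 := ⟨n - 1, by ring⟩
  rw [add_sub_cancel_right] at htn ⊢
  rw [hArec s htn (by omega), show B s = _ from funext (hBrec s htn (by omega)),
    show C s = _ from funext (hCrec s htn (by omega))]
  exact hmodel.condExp_exp_mul_sum_Icc_eq_of_succ hp hq hyad hFad hLad (by omega) (hnext (by omega))

/-- Under Assumption 1, the moment generating function of the aggregated
log-return `y_{t+1} + ⋯ + y_T` under the physical measure `ℙ` is exponentially affine in the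
past factors and leverages, with coefficients given by the backward recursion driven by the
one-step functions `𝒜`, `ℬᵢ`, `𝒞ⱼ`. -/
theorem mgf_physical_recursion
    {Ω : Type*} {m0 : MeasurableSpace Ω} {μ : Measure Ω} [IsProbabilityMeasure μ]
    (ℱ : Filtration ℤ m0) {k p q : ℕ} (hp : 0 < p) (hq : 0 < q)
    (F L : ℤ → Ω → (Fin k → ℝ)) (y : ℤ → Ω → ℝ)
    -- the processes are adapted
    (hFad : ∀ s : ℤ, StronglyMeasurable[ℱ s] (F s))
    (hLad : ∀ s : ℤ, StronglyMeasurable[ℱ s] (L s))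
    (hyad : ∀ s : ℤ, StronglyMeasurable[ℱ s] (y s))
    -- Assumption 1
    (𝒜 : ℝ → (Fin k → ℝ) → (Fin k → ℝ) → ℝ)
    (ℬ : ℝ → (Fin k → ℝ) → (Fin k → ℝ) → Fin p → (Fin k → ℝ))
    (𝒞 : ℝ → (Fin k → ℝ) → (Fin k → ℝ) → Fin q → (Fin k → ℝ))
    (hint : ∀ (s : ℤ) (z : ℝ) (b c : Fin k → ℝ),
      Integrable (fun ω =>
        Real.exp (z * y (s + 1) ω + dotk b (F (s + 1) ω) + dotk c (L (s + 1) ω))) μ)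
    (haff : ∀ (s : ℤ) (z : ℝ) (b c : Fin k → ℝ),
      (μ[fun ω =>
          Real.exp (z * y (s + 1) ω + dotk b (F (s + 1) ω) + dotk c (L (s + 1) ω)) | ℱ s])
        =ᵐ[μ] fun ω => Real.exp (𝒜 z b c
          + ∑ i : Fin p, dotk (ℬ z b c i) (F (s - (i : ℕ)) ω)
          + ∑ j : Fin q, dotk (𝒞 z b c j) (L (s - (j : ℕ)) ω)))
    (h𝒜0 : 𝒜 0 0 0 = 0) (hℬ0 : ∀ i, ℬ 0 0 0 i = 0) (h𝒞0 : ∀ j, 𝒞 0 0 0 j = 0)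
    -- the backward sequences
    (z : ℝ) (t T : ℤ) (htT : t < T)
    (A : ℤ → ℝ) (B : ℤ → Fin p → (Fin k → ℝ)) (C : ℤ → Fin q → (Fin k → ℝ))
    (hAT : A T = 0) (hBT : ∀ i, B T i = 0) (hCT : ∀ j, C T j = 0)
    (hArec : ∀ s : ℤ, t ≤ s → s < T →
      A s = A (s + 1) + 𝒜 z (B (s + 1) ⟨0, hp⟩) (C (s + 1) ⟨0, hq⟩))
    (hBrec : ∀ (s : ℤ), t ≤ s → s < T → ∀ i : Fin p,
      B s i = (if h : (i : ℕ) + 1 < p then B (s + 1) ⟨(i : ℕ) + 1, h⟩ else 0)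
        + ℬ z (B (s + 1) ⟨0, hp⟩) (C (s + 1) ⟨0, hq⟩) i)
    (hCrec : ∀ (s : ℤ), t ≤ s → s < T → ∀ j : Fin q,
      C s j = (if h : (j : ℕ) + 1 < q then C (s + 1) ⟨(j : ℕ) + 1, h⟩ else 0)
        + 𝒞 z (B (s + 1) ⟨0, hp⟩) (C (s + 1) ⟨0, hq⟩) j) :
    (μ[fun ω => Real.exp (z * ∑ u ∈ Finset.Icc (t + 1) T, y u ω) | ℱ t])
      =ᵐ[μ] fun ω => Real.exp (A t
        + ∑ i : Fin p, dotk (B t i) (F (t - (i : ℕ)) ω)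
        + ∑ j : Fin q, dotk (C t j) (L (t - (j : ℕ)) ω)) :=
  mgf_physical_recursion_general ℱ hp hq F L y hFad hLad hyad 𝒜 ℬ 𝒞 hint haff z t T htT A B C hAT
    hBT hCT hArec hBrec hCrec
end

section
/- Let (Ω, ℱ, (ℱ_s), ℙ) be a filtered probability space carrying ℝ^k-valued adapted processes (F_s) and (ℓ_s) and a real adapted process (y_s) satisfying Assumption 1 with functions 𝒜, ℬ_i (i = 1,…,p), 𝒞_j (j = 1,…,q), let r ∈ ℝ, ν₁ ∈ ℝ^k, ν₂ ∈ ℝ, and let M_{s,s+1} denote the stochastic discount factor. If 𝒜(1−ν₂, −ν₁, 0) = r + 𝒜(−ν₂, −ν₁, 0), ℬ_i(1−ν₂, −ν₁, 0) = ℬ_i(−ν₂, −ν₁, 0) for all i = 1,…,p, and 𝒞_j(1−ν₂, −ν₁, 0) = 𝒞_j(−ν₂, −ν₁, 0) for all j = 1,…,q, then for every s one has 𝔼[M_{s,s+1} e^{y_{s+1}} | ℱ_s] = e^r almost surely (the no-arbitrage condition). -/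
open MeasureTheory ProbabilityTheory Real
open scoped ENNReal

lemma dotk_zero_left {k : ℕ} (b : Fin k → ℝ) : dotk (0 : Fin k → ℝ) b = 0 := by
  simp [dotk]

lemma dotk_neg_left {k : ℕ} (a b : Fin k → ℝ) : dotk (-a) b = -dotk a b := by
  simp [dotk, Finset.sum_neg_distrib]

section PullOut

variable {Ω : Type*} {m m0 : MeasurableSpace Ω} {μ : Measure Ω}

theorem lintegral_mul_condLExp (hm : m ≤ m0) [SigmaFinite (μ.trim hm)] {φ X : Ω → ℝ≥0∞}
    (hφ : Measurable[m] φ) (hX : AEMeasurable X μ) :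
    ∫⁻ ω, φ ω * μ⁻[X|m] ω ∂μ = ∫⁻ ω, φ ω * X ω ∂μ := by
  have hcond : Measurable (μ⁻[X|m]) := measurable_condLExp' _ _ _
  refine Measurable.ennreal_induction (mα := m)
    (motive := fun φ => ∫⁻ ω, φ ω * μ⁻[X|m] ω ∂μ = ∫⁻ ω, φ ω * X ω ∂μ) ?_ ?_ ?_ hφ
  · intro c s hs
    simp only [← smul_eq_mul, ← Set.indicator_smul_apply_left]
    rw [lintegral_indicator (hm s hs), lintegral_indicator (hm s hs)]
    simp only [smul_eq_mul]
    rw [lintegral_const_mul c hcond, lintegral_const_mul'' c hX.restrict,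
      setLIntegral_condLExp hm _ _ hs]
  · intro f g _ hf _ ihf ihg
    have hfc : Measurable fun ω => f ω * μ⁻[X|m] ω := (hf.mono hm le_rfl).mul hcond
    have hfX : AEMeasurable (fun ω => f ω * X ω) μ := (hf.mono hm le_rfl).aemeasurable.mul hX
    simp only [Pi.add_apply, add_mul]
    rw [lintegral_add_left hfc, lintegral_add_left' hfX, ihf, ihg]
  · intro f hf hmono ih
    have hmul_mono : ∀ Y : Ω → ℝ≥0∞, Monotone fun n ω => f n ω * Y ω :=
      fun _ _ _ hab ω => mul_le_mul_left (hmono hab ω) _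
    simp only [ENNReal.iSup_mul]
    rw [lintegral_iSup' (f := fun n ω => f n ω * μ⁻[X|m] ω)
        (fun n => ((hf n).mono hm le_rfl).aemeasurable.mul hcond.aemeasurable)
        (.of_forall fun ω _ _ hab => hmul_mono _ hab ω),
      lintegral_iSup' (f := fun n ω => f n ω * X ω)
        (fun n => ((hf n).mono hm le_rfl).aemeasurable.mul hX)
        (.of_forall fun ω _ _ hab => hmul_mono _ hab ω)]
    simp only [ih]

theorem integrable_mul_of_integrable_mul_condExp (hm : m ≤ m0)
    [SigmaFinite (μ.trim hm)] {φ g : Ω → ℝ} (hφ : StronglyMeasurable[m] φ)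
    (hg : Integrable g μ) (hg0 : 0 ≤ᵐ[μ] g)
    (hφg : Integrable (φ * μ[g|m]) μ) : Integrable (φ * g) μ := by
  refine ⟨(hφ.mono hm).aestronglyMeasurable.mul hg.1, ?_⟩
  have hφ_meas : Measurable[m] fun ω => ‖φ ω‖ₑ := measurable_enorm.comp hφ.measurable
  calc ∫⁻ ω, ‖(φ * g) ω‖ₑ ∂μ
      = ∫⁻ ω, ‖φ ω‖ₑ * ‖g ω‖ₑ ∂μ := by simp only [Pi.mul_apply, enorm_mul]
    _ = ∫⁻ ω, ‖φ ω‖ₑ * μ⁻[fun ω => ‖g ω‖ₑ|m] ω ∂μ :=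
        (lintegral_mul_condLExp hm hφ_meas hg.1.enorm).symm
    _ = ∫⁻ ω, ‖(φ * μ[g|m]) ω‖ₑ ∂μ := by
        refine lintegral_congr_ae ?_
        filter_upwards [condLExp_enorm m hg hg0] with ω hω
        rw [hω, Pi.mul_apply, enorm_mul]
    _ < ⊤ := hφg.2

theorem condExp_mul_of_stronglyMeasurable_left_of_nonneg (hm : m ≤ m0)
    [SigmaFinite (μ.trim hm)] {φ g : Ω → ℝ} (hφ : StronglyMeasurable[m] φ)
    (hg : Integrable g μ) (hg0 : 0 ≤ᵐ[μ] g)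
    (hφg : Integrable (φ * μ[g|m]) μ) : μ[φ * g|m] =ᵐ[μ] φ * μ[g|m] :=
  condExp_mul_of_stronglyMeasurable_left hφ
    (integrable_mul_of_integrable_mul_condExp hm hφ hg hg0 hφg) hg

theorem condExp_div_condExp_ae_eq_const [IsFiniteMeasure μ] (hm : m ≤ m0)
    {g₀ g₁ : Ω → ℝ} {c : ℝ}
    (hg₁ : Integrable g₁ μ) (hg₁0 : 0 ≤ᵐ[μ] g₁) (hg₀ : ∀ᵐ ω ∂μ, μ[g₀|m] ω ≠ 0)
    (hc : μ[g₁|m] =ᵐ[μ] c • μ[g₀|m]) :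
    μ[fun ω => g₁ ω / μ[g₀|m] ω|m] =ᵐ[μ] fun _ => c := by
  have hinv : StronglyMeasurable[m] (μ[g₀|m])⁻¹ :=
    stronglyMeasurable_condExp.measurable.inv.stronglyMeasurable
  have hconst : (μ[g₀|m])⁻¹ * μ[g₁|m] =ᵐ[μ] fun _ => c := by
    filter_upwards [hg₀, hc] with ω h₀ h₁
    rw [Pi.mul_apply, Pi.inv_apply, h₁, Pi.smul_apply, smul_eq_mul, mul_left_comm,
      inv_mul_cancel₀ h₀, mul_one]
  have hdiv : (fun ω => g₁ ω / μ[g₀|m] ω) = (μ[g₀|m])⁻¹ * g₁ := by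
    ext ω
    simp [div_eq_inv_mul]
  rw [hdiv]
  exact (condExp_mul_of_stronglyMeasurable_left_of_nonneg hm hinv hg₁ hg₁0
    ((integrable_const c).congr hconst.symm)).trans hconst

end PullOut

theorem sdf_no_arbitrage_general
    {Ω : Type*} {m0 : MeasurableSpace Ω} {μ : Measure Ω} [IsProbabilityMeasure μ]
    (ℱ : Filtration ℤ m0) {k p q : ℕ}
    (F L : ℤ → Ω → (Fin k → ℝ)) (y : ℤ → Ω → ℝ)
    -- Assumption 1
    (𝒜 : ℝ → (Fin k → ℝ) → (Fin k → ℝ) → ℝ)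
    (ℬ : ℝ → (Fin k → ℝ) → (Fin k → ℝ) → Fin p → (Fin k → ℝ))
    (𝒞 : ℝ → (Fin k → ℝ) → (Fin k → ℝ) → Fin q → (Fin k → ℝ))
    (hint : ∀ (s : ℤ) (z : ℝ) (b c : Fin k → ℝ),
      Integrable (fun ω =>
        Real.exp (z * y (s + 1) ω + dotk b (F (s + 1) ω) + dotk c (L (s + 1) ω))) μ)
    (haff : ∀ (s : ℤ) (z : ℝ) (b c : Fin k → ℝ),
      (μ[fun ω =>
          Real.exp (z * y (s + 1) ω + dotk b (F (s + 1) ω) + dotk c (L (s + 1) ω)) | ℱ s])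
        =ᵐ[μ] fun ω => Real.exp (𝒜 z b c
          + ∑ i : Fin p, dotk (ℬ z b c i) (F (s - (i : ℕ)) ω)
          + ∑ j : Fin q, dotk (𝒞 z b c j) (L (s - (j : ℕ)) ω)))
    -- the stochastic discount factor
    (r : ℝ) (ν₁ : Fin k → ℝ) (ν₂ : ℝ)
    (M : ℤ → Ω → ℝ)
    (hM : ∀ s : ℤ, M s =ᵐ[μ] fun ω =>
      Real.exp (-dotk ν₁ (F (s + 1) ω) - ν₂ * y (s + 1) ω) /
        (μ[fun ω' => Real.exp (-dotk ν₁ (F (s + 1) ω') - ν₂ * y (s + 1) ω') | ℱ s]) ω)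
    -- the no-arbitrage restrictions on 𝒜, ℬᵢ, 𝒞ⱼ
    (h𝒜 : 𝒜 (1 - ν₂) (-ν₁) 0 = r + 𝒜 (-ν₂) (-ν₁) 0)
    (hℬ : ∀ i : Fin p, ℬ (1 - ν₂) (-ν₁) 0 i = ℬ (-ν₂) (-ν₁) 0 i)
    (h𝒞 : ∀ j : Fin q, 𝒞 (1 - ν₂) (-ν₁) 0 j = 𝒞 (-ν₂) (-ν₁) 0 j) :
    ∀ s : ℤ, (μ[fun ω => M s ω * Real.exp (y (s + 1) ω) | ℱ s])
      =ᵐ[μ] fun _ => Real.exp r := by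
  intro s
  set pay : ℝ → Ω → ℝ := fun z ω =>
    Real.exp (z * y (s + 1) ω + dotk (-ν₁) (F (s + 1) ω) + dotk 0 (L (s + 1) ω)) with hpay
  have hden :
      (fun ω => Real.exp (-dotk ν₁ (F (s + 1) ω) - ν₂ * y (s + 1) ω)) = pay (-ν₂) := by
    ext ω
    simp only [hpay, dotk_neg_left, dotk_zero_left]
    ring_nf
  have hpos : ∀ᵐ ω ∂μ, μ[pay (-ν₂)|ℱ s] ω ≠ 0 := by
    filter_upwards [haff s (-ν₂) (-ν₁) 0] with ω hω
    exact hω ▸ (Real.exp_pos _).ne'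
  have hratio : μ[pay (1 - ν₂)|ℱ s] =ᵐ[μ] Real.exp r • μ[pay (-ν₂)|ℱ s] := by
    filter_upwards [haff s (1 - ν₂) (-ν₁) 0, haff s (-ν₂) (-ν₁) 0] with ω h₁ h₀
    rw [h₁, Pi.smul_apply, h₀, smul_eq_mul, ← Real.exp_add, h𝒜]
    simp only [hℬ, h𝒞]
    ring_nf
  have hpayoff : (fun ω => M s ω * Real.exp (y (s + 1) ω))
      =ᵐ[μ] fun ω => pay (1 - ν₂) ω / μ[pay (-ν₂)|ℱ s] ω := by
    filter_upwards [hM s] with ω hω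
    rw [hω, hden, div_mul_eq_mul_div, ← Real.exp_add]
    congr 1
    simp only [hpay, dotk_neg_left, dotk_zero_left]
    ring_nf
  exact (condExp_congr_ae hpayoff).trans <| condExp_div_condExp_ae_eq_const (ℱ.le s)
    (hint s (1 - ν₂) (-ν₁) 0) (.of_forall fun ω => (Real.exp_pos _).le) hpos hratio

/-- Under Assumption 1, if the functions `𝒜`, `ℬᵢ`, `𝒞ⱼ` satisfy the
restrictions `𝒜(1−ν₂,−ν₁,0) = r + 𝒜(−ν₂,−ν₁,0)`, `ℬᵢ(1−ν₂,−ν₁,0) = ℬᵢ(−ν₂,−ν₁,0)` and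
`𝒞ⱼ(1−ν₂,−ν₁,0) = 𝒞ⱼ(−ν₂,−ν₁,0)`, then the exponential-affine stochastic discount factor
satisfies the no-arbitrage condition `𝔼[M_{s,s+1} e^{y_{s+1}} | ℱ_s] = e^r` a.s. -/
theorem sdf_no_arbitrage
    {Ω : Type*} {m0 : MeasurableSpace Ω} {μ : Measure Ω} [IsProbabilityMeasure μ]
    (ℱ : Filtration ℤ m0) {k p q : ℕ} (hp : 0 < p) (hq : 0 < q)
    (F L : ℤ → Ω → (Fin k → ℝ)) (y : ℤ → Ω → ℝ)
    -- the processes are adapted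
    (hFad : ∀ s : ℤ, StronglyMeasurable[ℱ s] (F s))
    (hLad : ∀ s : ℤ, StronglyMeasurable[ℱ s] (L s))
    (hyad : ∀ s : ℤ, StronglyMeasurable[ℱ s] (y s))
    -- Assumption 1
    (𝒜 : ℝ → (Fin k → ℝ) → (Fin k → ℝ) → ℝ)
    (ℬ : ℝ → (Fin k → ℝ) → (Fin k → ℝ) → Fin p → (Fin k → ℝ))
    (𝒞 : ℝ → (Fin k → ℝ) → (Fin k → ℝ) → Fin q → (Fin k → ℝ))
    (hint : ∀ (s : ℤ) (z : ℝ) (b c : Fin k → ℝ),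
      Integrable (fun ω =>
        Real.exp (z * y (s + 1) ω + dotk b (F (s + 1) ω) + dotk c (L (s + 1) ω))) μ)
    (haff : ∀ (s : ℤ) (z : ℝ) (b c : Fin k → ℝ),
      (μ[fun ω =>
          Real.exp (z * y (s + 1) ω + dotk b (F (s + 1) ω) + dotk c (L (s + 1) ω)) | ℱ s])
        =ᵐ[μ] fun ω => Real.exp (𝒜 z b c
          + ∑ i : Fin p, dotk (ℬ z b c i) (F (s - (i : ℕ)) ω)
          + ∑ j : Fin q, dotk (𝒞 z b c j) (L (s - (j : ℕ)) ω)))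
    (h𝒜0 : 𝒜 0 0 0 = 0) (hℬ0 : ∀ i, ℬ 0 0 0 i = 0) (h𝒞0 : ∀ j, 𝒞 0 0 0 j = 0)
    -- the stochastic discount factor
    (r : ℝ) (ν₁ : Fin k → ℝ) (ν₂ : ℝ)
    (M : ℤ → Ω → ℝ)
    (hM : ∀ s : ℤ, M s =ᵐ[μ] fun ω =>
      Real.exp (-dotk ν₁ (F (s + 1) ω) - ν₂ * y (s + 1) ω) /
        (μ[fun ω' => Real.exp (-dotk ν₁ (F (s + 1) ω') - ν₂ * y (s + 1) ω') | ℱ s]) ω)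
    -- the no-arbitrage restrictions on 𝒜, ℬᵢ, 𝒞ⱼ
    (h𝒜 : 𝒜 (1 - ν₂) (-ν₁) 0 = r + 𝒜 (-ν₂) (-ν₁) 0)
    (hℬ : ∀ i : Fin p, ℬ (1 - ν₂) (-ν₁) 0 i = ℬ (-ν₂) (-ν₁) 0 i)
    (h𝒞 : ∀ j : Fin q, 𝒞 (1 - ν₂) (-ν₁) 0 j = 𝒞 (-ν₂) (-ν₁) 0 j) :
    ∀ s : ℤ, (μ[fun ω => M s ω * Real.exp (y (s + 1) ω) | ℱ s])
      =ᵐ[μ] fun _ => Real.exp r :=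
  sdf_no_arbitrage_general ℱ F L y 𝒜 ℬ 𝒞 hint haff r ν₁ ν₂ M hM h𝒜 hℬ h𝒞
end

section
/- Let δ > 0, Θ ≥ 0, θ > 0, and λ, γ, r ∈ ℝ. Consider on ℝ × ℝ the product measure μ = γ̄(δ, Θ, θ) ⊗ N(0,1), with first coordinate R and second coordinate ε. For all z, b, c ∈ ℝ with c < 1/2 and θ x(z, b, c) < 1, where x(z, b, c) = zλ + b + ((1/2) z² + γ² c − 2 c γ z) / (1 − 2c), one has ∫ exp(z (r + λ R + √R ε) + b R + c (ε − γ √R)²) dμ = exp(z r − (1/2) ln(1 − 2c) − δ w(x(z,b,c), θ) + v(x(z,b,c), θ) Θ), where v(x, θ) = θx/(1 − θx) and w(x, θ) = ln(1 − θx). (In particular, the one-step LHARG model satisfies Assumption 1 with 𝒜(z,b,c) = zr − (1/2)ln(1−2c) − δ w(x,θ) + d v(x,θ), ℬ_i(z,b,c) = v(x,θ) β_i, 𝒞_j(z,b,c) = v(x,θ) α_j, upon taking Θ = d + ∑_i β_i RV_{t+1−i} + ∑_j α_j ℓ_{t+1−j}.) -/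
open MeasureTheory ProbabilityTheory Real

/-- The noncentral gamma distribution `γ̄(δ, c, θ)` with shape `δ > 0`, noncentrality `c ≥ 0`
and scale `θ > 0`: the Poisson mixture `∑ₖ (e^{−c} cᵏ / k!) • Γ(δ + k, θ)`, where `Γ(a, θ)`
is the gamma distribution with shape `a` and rate `1/θ`. -/
noncomputable def ncGamma (δ c θ : ℝ) : Measure ℝ :=
  Measure.sum fun k : ℕ =>
    ENNReal.ofReal (Real.exp (-c) * c ^ k / Nat.factorial k) • gammaMeasure (δ + k) θ⁻¹

/-- `v(x, θ) = θx/(1 − θx)`. -/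
noncomputable def vfun (x θ : ℝ) : ℝ := θ * x / (1 - θ * x)

/-- `w(x, θ) = ln(1 − θx)`. -/
noncomputable def wfun (x θ : ℝ) : ℝ := Real.log (1 - θ * x)

/-- `x(z, b, c) = zλ + b + ((1/2)z² + γ²c − 2cγz)/(1 − 2c)`. -/
noncomputable def xfun (lam γ z b c : ℝ) : ℝ :=
  z * lam + b + ((1 / 2) * z ^ 2 + γ ^ 2 * c - 2 * c * γ * z) / (1 - 2 * c)

/-!
Both inner integrals are exponential tilts of densities whose total mass is known:
`e^{xs}` times the gamma density of rate `r` is `(r / (r - x))^a` times the gamma density of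
rate `r - x`, and `e^{cy² + By}` times the standard Gaussian density is
`e^{B²/(2(1-2c))} / √(1-2c)` times the Gaussian density of variance `1/(1-2c)`.
By Tonelli, integrating out `ε` first and completing the square leaves
`e^{zr} (1-2c)^{-1/2} e^{x(z,b,c) R}`; the Poisson mixture of the gamma transforms
`(1-θx)^{-(δ+k)}` then sums to `(1-θx)^{-δ} e^{Θ θx/(1-θx)}`.
-/

lemma measurable_gammaPDF (a r : ℝ) : Measurable (gammaPDF a r) :=
  (measurable_gammaPDFReal a r).ennreal_ofReal

lemma gammaPDFReal_mul_exp {a r x : ℝ} (hr : 0 ≤ r) (hx : x < r) (s : ℝ) :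
    gammaPDFReal a r s * exp (x * s) = (r / (r - x)) ^ a * gammaPDFReal a (r - x) s := by
  have hrx : 0 < r - x := by linarith
  unfold gammaPDFReal
  split_ifs
  · rw [div_rpow hr hrx.le]
    field_simp
    rw [mul_assoc, ← exp_add]
    ring_nf
  · simp

lemma lintegral_exp_mul_gammaMeasure {a r x : ℝ} (ha : 0 < a) (hr : 0 < r) (hx : x < r) :
    ∫⁻ s, ENNReal.ofReal (exp (x * s)) ∂gammaMeasure a r =
      ENNReal.ofReal ((r / (r - x)) ^ a) := by
  have hrx : 0 < r - x := by linarith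
  rw [gammaMeasure, lintegral_withDensity_eq_lintegral_mul _ (measurable_gammaPDF a r)
    (by fun_prop)]
  calc ∫⁻ s, (gammaPDF a r * fun s ↦ ENNReal.ofReal (exp (x * s))) s
      = ∫⁻ s, ENNReal.ofReal ((r / (r - x)) ^ a) * gammaPDF a (r - x) s := by
        refine lintegral_congr fun s ↦ ?_
        simp only [Pi.mul_apply, gammaPDF]
        rw [← ENNReal.ofReal_mul (gammaPDFReal_nonneg ha hr s), gammaPDFReal_mul_exp hr.le hx,
          ENNReal.ofReal_mul (by positivity)]
    _ = ENNReal.ofReal ((r / (r - x)) ^ a) := by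
        rw [lintegral_const_mul _ (measurable_gammaPDF _ _), lintegral_gammaPDF_eq_one ha hrx,
          mul_one]

lemma hasSum_poisson_mul_pow (Θ t : ℝ) :
    HasSum (fun k : ℕ ↦ exp (-Θ) * Θ ^ k / k.factorial * t ^ k) (exp (Θ * (t - 1))) := by
  have h := (NormedSpace.expSeries_div_hasSum_exp (Θ * t)).mul_left (exp (-Θ))
  rw [← exp_eq_exp_ℝ, ← exp_add] at h
  rw [show Θ * (t - 1) = -Θ + Θ * t by ring]
  exact h.congr_fun fun k ↦ by rw [mul_pow]; ring

lemma ae_nonneg_gammaMeasure (a r : ℝ) : ∀ᵐ s ∂gammaMeasure a r, 0 ≤ s := by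
  rw [gammaMeasure, ae_withDensity_iff (measurable_gammaPDF a r)]
  exact ae_of_all _ fun s hs ↦ not_lt.1 fun hneg ↦ hs (gammaPDF_of_neg hneg)

lemma ae_nonneg_ncGamma (δ Θ θ : ℝ) : ∀ᵐ s ∂ncGamma δ Θ θ, 0 ≤ s :=
  (Measure.ae_sum_iff' (p := (0 ≤ ·)) measurableSet_Ici).2 fun _ ↦
    Measure.ae_smul_measure (ae_nonneg_gammaMeasure _ _) _

lemma lintegral_exp_mul_ncGamma {δ Θ θ x : ℝ} (hδ : 0 < δ) (hΘ : 0 ≤ Θ) (hθ : 0 < θ)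
    (hx : θ * x < 1) :
    ∫⁻ s, ENNReal.ofReal (exp (x * s)) ∂ncGamma δ Θ θ =
      ENNReal.ofReal (exp (-δ * wfun x θ + vfun x θ * Θ)) := by
  have hθx : 0 < 1 - θ * x := by linarith
  set t := (1 - θ * x)⁻¹ with ht
  have htpos : 0 < t := inv_pos.2 hθx
  have hrate : θ⁻¹ / (θ⁻¹ - x) = t := by rw [ht]; field_simp
  have hterm (k : ℕ) : ∫⁻ s, ENNReal.ofReal (exp (x * s))
      ∂(ENNReal.ofReal (exp (-Θ) * Θ ^ k / k.factorial) • gammaMeasure (δ + k) θ⁻¹) =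
      ENNReal.ofReal (t ^ δ * (exp (-Θ) * Θ ^ k / k.factorial * t ^ k)) := by
    rw [lintegral_smul_measure, lintegral_exp_mul_gammaMeasure (by positivity) (inv_pos.2 hθ)
        (by rwa [← mul_lt_mul_iff_right₀ hθ, mul_inv_cancel₀ hθ.ne']),
      hrate, smul_eq_mul, ← ENNReal.ofReal_mul (by positivity), rpow_add htpos, rpow_natCast]
    ring_nf
  have hsum := (hasSum_poisson_mul_pow Θ t).mul_left (t ^ δ)
  rw [ncGamma, lintegral_sum_measure, tsum_congr hterm,
    ← ENNReal.ofReal_tsum_of_nonneg (fun k ↦ by positivity) hsum.summable, hsum.tsum_eq,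
    rpow_def_of_pos htpos, ← exp_add, ht, log_inv, wfun, vfun]
  congr 2
  field_simp
  ring

lemma gaussianPDFReal_mul_exp {c : ℝ} (hc : c < 1 / 2) (B y : ℝ) :
    gaussianPDFReal 0 1 y * exp (c * y ^ 2 + B * y) =
      exp (B ^ 2 / (2 * (1 - 2 * c))) / √(1 - 2 * c) *
        gaussianPDFReal (B / (1 - 2 * c)) (1 - 2 * c)⁻¹.toNNReal y := by
  have h2c : 0 < 1 - 2 * c := by linarith
  simp only [gaussianPDFReal, NNReal.coe_one, Real.coe_toNNReal _ (inv_nonneg.2 h2c.le),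
    sqrt_mul' _ (inv_nonneg.2 h2c.le), sqrt_inv]
  field_simp
  rw [← exp_add, ← exp_add]
  congr 1
  field_simp
  ring

lemma lintegral_exp_quadratic_gaussianReal {c : ℝ} (hc : c < 1 / 2) (B K : ℝ) :
    ∫⁻ y, ENNReal.ofReal (exp (c * y ^ 2 + B * y + K)) ∂gaussianReal 0 1 =
      ENNReal.ofReal (exp (K + B ^ 2 / (2 * (1 - 2 * c))) / √(1 - 2 * c)) := by
  have h2c : 0 < 1 - 2 * c := by linarith
  have hv : (1 - 2 * c)⁻¹.toNNReal ≠ 0 := (Real.toNNReal_pos.2 (inv_pos.2 h2c)).ne'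
  rw [gaussianReal_of_var_ne_zero _ one_ne_zero,
    lintegral_withDensity_eq_lintegral_mul _ (measurable_gaussianPDF 0 1) (by fun_prop)]
  calc ∫⁻ y, (gaussianPDF 0 1 * fun y ↦ ENNReal.ofReal (exp (c * y ^ 2 + B * y + K))) y
      = ∫⁻ y, ENNReal.ofReal (exp (K + B ^ 2 / (2 * (1 - 2 * c))) / √(1 - 2 * c)) *
          gaussianPDF (B / (1 - 2 * c)) (1 - 2 * c)⁻¹.toNNReal y := by
        refine lintegral_congr fun y ↦ ?_
        simp only [Pi.mul_apply, gaussianPDF]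
        rw [← ENNReal.ofReal_mul (gaussianPDFReal_nonneg _ _ _),
          ← ENNReal.ofReal_mul (by positivity), exp_add (c * y ^ 2 + B * y) K, ← mul_assoc,
          gaussianPDFReal_mul_exp hc, exp_add]
        ring_nf
    _ = ENNReal.ofReal (exp (K + B ^ 2 / (2 * (1 - 2 * c))) / √(1 - 2 * c)) := by
        rw [lintegral_const_mul _ (measurable_gaussianPDF _ _),
          lintegral_gaussianPDF_eq_one _ hv, mul_one]

lemma lintegral_exp_lharg_gaussianReal (lam γ r z b : ℝ) {c s : ℝ} (hc : c < 1 / 2)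
    (hs : 0 ≤ s) :
    ∫⁻ y, ENNReal.ofReal (exp (z * (r + lam * s + √s * y) + b * s + c * (y - γ * √s) ^ 2))
        ∂gaussianReal 0 1 =
      ENNReal.ofReal (exp (z * r) / √(1 - 2 * c)) *
        ENNReal.ofReal (exp (xfun lam γ z b c * s)) := by
  have h2c : 1 - 2 * c ≠ 0 := by linarith
  have hquad (y : ℝ) : z * (r + lam * s + √s * y) + b * s + c * (y - γ * √s) ^ 2 =
      c * y ^ 2 + (z - 2 * c * γ) * √s * y + (z * r + (z * lam + b + c * γ ^ 2) * s) := by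
    linear_combination c * γ ^ 2 * sq_sqrt hs
  have hcomplete : z * r + (z * lam + b + c * γ ^ 2) * s +
      ((z - 2 * c * γ) * √s) ^ 2 / (2 * (1 - 2 * c)) = z * r + xfun lam γ z b c * s := by
    rw [mul_pow, sq_sqrt hs, xfun, ← div_div]
    linear_combination (-(c * γ ^ 2 * s)) * mul_inv_cancel₀ h2c
  simp_rw [hquad]
  rw [lintegral_exp_quadratic_gaussianReal hc, hcomplete, exp_add,
    ← ENNReal.ofReal_mul (by positivity)]
  ring_nf

/-- One-step joint moment generating function of the LHARG model: on
`μ = γ̄(δ, Θ, θ) ⊗ N(0,1)` with coordinates `(R, ε)`, for `c < 1/2` and `θ x(z,b,c) < 1`,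
`∫ exp(z(r + λR + √R ε) + bR + c(ε − γ√R)²) dμ
  = exp(zr − (1/2)ln(1 − 2c) − δ w(x(z,b,c),θ) + v(x(z,b,c),θ) Θ)`. -/
theorem lharg_one_step_mgf (δ Θ θ lam γ r : ℝ)
    (hδ : 0 < δ) (hΘ : 0 ≤ Θ) (hθ : 0 < θ) (z b c : ℝ)
    (hc : c < 1 / 2) (hx : θ * xfun lam γ z b c < 1) :
    ∫ pt : ℝ × ℝ, Real.exp (z * (r + lam * pt.1 + Real.sqrt pt.1 * pt.2) + b * pt.1 +
        c * (pt.2 - γ * Real.sqrt pt.1) ^ 2)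
        ∂((ncGamma δ Θ θ).prod (gaussianReal 0 1)) =
      Real.exp (z * r - (1 / 2) * Real.log (1 - 2 * c) - δ * wfun (xfun lam γ z b c) θ +
        vfun (xfun lam γ z b c) θ * Θ) := by
  have h2c : 0 < 1 - 2 * c := by linarith
  have hF : Continuous fun pt : ℝ × ℝ ↦ exp (z * (r + lam * pt.1 + √pt.1 * pt.2) + b * pt.1 +
      c * (pt.2 - γ * √pt.1) ^ 2) := by fun_prop
  rw [integral_eq_lintegral_of_nonneg_ae (ae_of_all _ fun _ ↦ (exp_pos _).le)
      hF.aestronglyMeasurable, lintegral_prod _ hF.measurable.ennreal_ofReal.aemeasurable,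
    lintegral_congr_ae <| (ae_nonneg_ncGamma δ Θ θ).mono fun s hs ↦
      lintegral_exp_lharg_gaussianReal lam γ r z b hc hs,
    lintegral_const_mul' _ _ ENNReal.ofReal_ne_top, lintegral_exp_mul_ncGamma hδ hΘ hθ hx,
    ← ENNReal.ofReal_mul (by positivity), ENNReal.toReal_ofReal (by positivity),
    sqrt_eq_rpow, rpow_def_of_pos h2c, div_mul_eq_mul_div, ← exp_add, ← exp_sub]
  ring_nf
end

section
/- Let λ, γ, r ∈ ℝ, θ > 0, δ > 0, d ≥ 0, and β_1,…,β_p, α_1,…,α_q ∈ ℝ. Define x(z, b, c) = zλ + b + ((1/2) z² + γ² c − 2 c γ z)/(1 − 2c), v(x, θ) = θx/(1 − θx), w(x, θ) = ln(1 − θx), and the functions 𝒜(z,b,c) = z r − (1/2) ln(1 − 2c) − δ w(x(z,b,c), θ) + d v(x(z,b,c), θ), ℬ_i(z,b,c) = v(x(z,b,c), θ) β_i (i = 1,…,p), 𝒞_j(z,b,c) = v(x(z,b,c), θ) α_j (j = 1,…,q). Let ν₁, ν₂ ∈ ℝ satisfy θ x(1−ν₂, −ν₁, 0) < 1 and θ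 x(−ν₂, −ν₁, 0) < 1. Then the no-arbitrage conditions [𝒜(1−ν₂, −ν₁, 0) = r + 𝒜(−ν₂, −ν₁, 0), and ℬ_i(1−ν₂, −ν₁, 0) = ℬ_i(−ν₂, −ν₁, 0) for all i, and 𝒞_j(1−ν₂, −ν₁, 0) = 𝒞_j(−ν₂, −ν₁, 0) for all j] hold if and only if ν₂ = λ + 1/2. -/
/-! At `c = 0` the state `x` is quadratic in `z`, so a unit shift of `z` changes it by an affine
amount; and on the domain `θx < 1` of the moment generating function, `−δ w + d v` is strictly
increasing in `x`. Hence the drift condition on `𝒜` forces the two states to coincide, which is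
exactly `ν₂ = λ + 1/2`, and then the conditions on `ℬ_i`, `𝒞_j` hold trivially. -/

lemma xfun_add_one_sub (lam γ z b : ℝ) :
    xfun lam γ (z + 1) b 0 - xfun lam γ z b 0 = lam + z + 1 / 2 := by
  simp only [xfun]
  ring

lemma wfun_strictAntiOn {θ : ℝ} (hθ : 0 < θ) : StrictAntiOn (wfun · θ) {x | θ * x < 1} := by
  intro a _ b (hb : θ * b < 1) hab
  exact Real.log_lt_log (by linarith) (by linarith [mul_lt_mul_of_pos_left hab hθ])

lemma vfun_monotoneOn {θ : ℝ} (hθ : 0 ≤ θ) : MonotoneOn (vfun · θ) {x | θ * x < 1} := by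
  intro a (ha : θ * a < 1) b (hb : θ * b < 1) hab
  simp only [vfun]
  rw [div_le_div_iff₀ (by linarith) (by linarith)]
  nlinarith [mul_le_mul_of_nonneg_left hab hθ]

lemma strictMonoOn_neg_wfun_add_vfun {θ δ d : ℝ} (hθ : 0 < θ) (hδ : 0 < δ) (hd : 0 ≤ d) :
    StrictMonoOn (fun x => -δ * wfun x θ + d * vfun x θ) {x | θ * x < 1} := by
  intro a ha b hb hab
  have hw := mul_lt_mul_of_pos_left (wfun_strictAntiOn hθ ha hb hab) hδ
  have hv := mul_le_mul_of_nonneg_left (vfun_monotoneOn hθ.le ha hb hab.le) hd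
  dsimp only at hw hv ⊢
  linarith

/-- No-arbitrage conditions for the LHARG model hold iff `ν₂ = λ + 1/2`. -/
theorem lharg_no_arbitrage_iff (lam γ r θ δ d : ℝ) (p q : ℕ)
    (β : Fin p → ℝ) (α : Fin q → ℝ)
    (hθ : 0 < θ) (hδ : 0 < δ) (hd : 0 ≤ d) (ν₁ ν₂ : ℝ)
    (h1 : θ * xfun lam γ (1 - ν₂) (-ν₁) 0 < 1)
    (h0 : θ * xfun lam γ (-ν₂) (-ν₁) 0 < 1) :
    let A : ℝ → ℝ → ℝ → ℝ := fun z b c =>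
      z * r - (1 / 2) * Real.log (1 - 2 * c) - δ * wfun (xfun lam γ z b c) θ +
        d * vfun (xfun lam γ z b c) θ
    let B : Fin p → ℝ → ℝ → ℝ → ℝ := fun i z b c => vfun (xfun lam γ z b c) θ * β i
    let C : Fin q → ℝ → ℝ → ℝ → ℝ := fun j z b c => vfun (xfun lam γ z b c) θ * α j
    (A (1 - ν₂) (-ν₁) 0 = r + A (-ν₂) (-ν₁) 0 ∧
     (∀ i : Fin p, B i (1 - ν₂) (-ν₁) 0 = B i (-ν₂) (-ν₁) 0) ∧
     (∀ j : Fin q, C j (1 - ν₂) (-ν₁) 0 = C j (-ν₂) (-ν₁) 0)) ↔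
    ν₂ = lam + 1 / 2 := by
  intro A B C
  set x₁ := xfun lam γ (1 - ν₂) (-ν₁) 0
  set x₀ := xfun lam γ (-ν₂) (-ν₁) 0
  set g := fun x => -δ * wfun x θ + d * vfun x θ
  have hx : x₁ = x₀ ↔ ν₂ = lam + 1 / 2 := by
    have hshift := xfun_add_one_sub lam γ (-ν₂) (-ν₁)
    rw [neg_add_eq_sub] at hshift
    constructor <;> intro h <;> linarith
  have hA : A (1 - ν₂) (-ν₁) 0 = r + A (-ν₂) (-ν₁) 0 ↔ g x₁ = g x₀ := by
    simp only [A, g, mul_zero, sub_zero, Real.log_one]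
    constructor <;> intro h <;> linarith
  rw [← hx]
  constructor
  · rintro ⟨hA₁, -, -⟩
    exact (strictMonoOn_neg_wfun_add_vfun hθ hδ hd).injOn h1 h0 (hA.1 hA₁)
  · intro h
    exact ⟨hA.2 (by rw [h]), fun i => congrArg (vfun · θ * β i) h,
      fun j => congrArg (vfun · θ * α j) h⟩
end

section
/- Let λ, γ, ν₁ ∈ ℝ, θ > 0, δ > 0, d ≥ 0, β, α ∈ ℝ, and set ν₂ = λ + 1/2, γ* = γ + λ + 1/2, Y* = −λ²/2 − ν₁ + 1/8; assume θ Y* < 1 and set θ* = θ/(1 − θ Y*), δ* = δ, d* = d/(1 − θ Y*), β* = β/(1 − θ Y*), α* = α/(1 − θ Y*). For any z, B, C ∈ ℝ with C < 1/2, define X* = (z − ν₂)λ + B − ν₁ + ((1/2)(z − ν₂)² + γ² C − 2 C γ (z − ν₂))/(1 − 2C) and X** = −(1/2) z + B + ((1/2) z² + (γ*)² C − 2 C γ* z)/(1 − 2C), and assume θ X* < 1. Then: (i) δ (w(X*, θ) − w(Y*, θ)) = δ* w(X**, θ*); (ii) β (v(X*, θ) − v(Y*, θ)) = β* v(X**,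 θ*); (iii) α (v(X*, θ) − v(Y*, θ)) = α* v(X**, θ*); (iv) d (v(X*, θ) − v(Y*, θ)) = d* v(X**, θ*). Consequently, under the risk-neutral measure the realized variance still follows a LHARG process with the starred parameters and λ* = −1/2. -/
section Rescaling

variable {x y θ : ℝ}

theorem one_sub_div_mul_sub (hy : θ * y ≠ 1) :
    1 - θ / (1 - θ * y) * (x - y) = (1 - θ * x) / (1 - θ * y) := by
  have hy' : 1 - θ * y ≠ 0 := sub_ne_zero.mpr hy.symm
  field_simp
  ring

theorem wfun_sub_wfun (hx : θ * x ≠ 1) (hy : θ * y ≠ 1) :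
    wfun x θ - wfun y θ = wfun (x - y) (θ / (1 - θ * y)) := by
  rw [wfun, wfun, wfun, one_sub_div_mul_sub hy,
    Real.log_div (sub_ne_zero.mpr hx.symm) (sub_ne_zero.mpr hy.symm)]

theorem vfun_sub_vfun (hx : θ * x ≠ 1) (hy : θ * y ≠ 1) :
    vfun x θ - vfun y θ = vfun (x - y) (θ / (1 - θ * y)) / (1 - θ * y) := by
  have hx' : 1 - θ * x ≠ 0 := sub_ne_zero.mpr hx.symm
  have hy' : 1 - θ * y ≠ 0 := sub_ne_zero.mpr hy.symm
  rw [vfun, vfun, vfun, one_sub_div_mul_sub hy]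
  field_simp
  ring

end Rescaling

/-- Completing the square in `z − ν₂`: replacing `γ` by `γ* = γ + λ + 1/2` absorbs every
`λ`-dependent term except the constant `Y*`. -/
theorem lharg_starred_exponent_eq_sub (lam γ ν₁ z B C : ℝ) (hC : 1 - 2 * C ≠ 0) :
    -(1 / 2) * z + B +
        ((1 / 2) * z ^ 2 + (γ + lam + 1 / 2) ^ 2 * C - 2 * C * (γ + lam + 1 / 2) * z) /
          (1 - 2 * C) =
      ((z - (lam + 1 / 2)) * lam + B - ν₁ +
          ((1 / 2) * (z - (lam + 1 / 2)) ^ 2 + γ ^ 2 * C - 2 * C * γ * (z - (lam + 1 / 2))) /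
            (1 - 2 * C)) -
        (-lam ^ 2 / 2 - ν₁ + 1 / 8) := by
  field_simp
  ring

theorem lharg_risk_neutral_mapping_general (lam γ ν₁ θ δ d β α : ℝ)
    (z B C : ℝ) (hC : C < 1 / 2) :
    let ν₂ : ℝ := lam + 1 / 2
    let γs : ℝ := γ + lam + 1 / 2
    let Ys : ℝ := -lam ^ 2 / 2 - ν₁ + 1 / 8
    let Xs : ℝ := (z - ν₂) * lam + B - ν₁ +
      ((1 / 2) * (z - ν₂) ^ 2 + γ ^ 2 * C - 2 * C * γ * (z - ν₂)) / (1 - 2 * C)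
    let Xss : ℝ := -(1 / 2) * z + B +
      ((1 / 2) * z ^ 2 + γs ^ 2 * C - 2 * C * γs * z) / (1 - 2 * C)
    let θs : ℝ := θ / (1 - θ * Ys)
    let δs : ℝ := δ
    let ds : ℝ := d / (1 - θ * Ys)
    let βs : ℝ := β / (1 - θ * Ys)
    let αs : ℝ := α / (1 - θ * Ys)
    θ * Ys < 1 → θ * Xs < 1 →
      (δ * (wfun Xs θ - wfun Ys θ) = δs * wfun Xss θs ∧
       β * (vfun Xs θ - vfun Ys θ) = βs * vfun Xss θs ∧
       α * (vfun Xs θ - vfun Ys θ) = αs * vfun Xss θs ∧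
       d * (vfun Xs θ - vfun Ys θ) = ds * vfun Xss θs) := by
  intro ν₂ γs Ys Xs Xss θs δs ds βs αs hY hX
  have hXss : Xss = Xs - Ys := lharg_starred_exponent_eq_sub lam γ ν₁ z B C (by linarith)
  have hv (c : ℝ) : c * (vfun Xs θ - vfun Ys θ) = c / (1 - θ * Ys) * vfun Xss θs := by
    rw [vfun_sub_vfun hX.ne hY.ne, hXss, mul_div_assoc', div_mul_eq_mul_div]
  exact ⟨by rw [wfun_sub_wfun hX.ne hY.ne, hXss], hv β, hv α, hv d⟩

/-- Risk-neutral parameter mapping of the LHARG model: with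
`ν₂ = λ + 1/2`, `γ* = γ + λ + 1/2`, `Y* = −λ²/2 − ν₁ + 1/8`, `θ* = θ/(1 − θY*)`,
`δ* = δ`, `d* = d/(1 − θY*)`, `β* = β/(1 − θY*)`, `α* = α/(1 − θY*)`, the risk-neutral
recursion coefficients coincide with the physical ones computed with the starred parameters. -/
theorem lharg_risk_neutral_mapping (lam γ ν₁ θ δ d β α : ℝ)
    (hθ : 0 < θ) (hδ : 0 < δ) (hd : 0 ≤ d)
    (z B C : ℝ) (hC : C < 1 / 2) :
    let ν₂ : ℝ := lam + 1 / 2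
    let γs : ℝ := γ + lam + 1 / 2
    let Ys : ℝ := -lam ^ 2 / 2 - ν₁ + 1 / 8
    let Xs : ℝ := (z - ν₂) * lam + B - ν₁ +
      ((1 / 2) * (z - ν₂) ^ 2 + γ ^ 2 * C - 2 * C * γ * (z - ν₂)) / (1 - 2 * C)
    let Xss : ℝ := -(1 / 2) * z + B +
      ((1 / 2) * z ^ 2 + γs ^ 2 * C - 2 * C * γs * z) / (1 - 2 * C)
    let θs : ℝ := θ / (1 - θ * Ys)
    let δs : ℝ := δ
    let ds : ℝ := d / (1 - θ * Ys)
    let βs : ℝ := β / (1 - θ * Ys)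
    let αs : ℝ := α / (1 - θ * Ys)
    θ * Ys < 1 → θ * Xs < 1 →
      (δ * (wfun Xs θ - wfun Ys θ) = δs * wfun Xss θs ∧
       β * (vfun Xs θ - vfun Ys θ) = βs * vfun Xss θs ∧
       α * (vfun Xs θ - vfun Ys θ) = αs * vfun Xss θs ∧
       d * (vfun Xs θ - vfun Ys θ) = ds * vfun Xss θs) :=
  lharg_risk_neutral_mapping_general lam γ ν₁ θ δ d β α z B C hC
end
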